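/- With B the relativised collapsing hierarchy: if α = φ γ δ with γ, δ < φ γ δ (normal form for the Veblen function), then for every ordinal η, α ∈ B(η) if and only if both γ ∈ B(η) and δ ∈ B(η). -/

import Mathlib

open Ordinal

/-- `derivBFamily` as in the older Mathlib (removed since): the derivative of the
family `familyOfBFamily o f`. -/
noncomputable def derivBFamily (o : Ordinal.{0}) (f : ∀ b < o, Ordinal.{0} → Ordinal.{0}) :
    Ordinal.{0} → Ordinal.{0} :=
  derivFamily (familyOfBFamily o f)

/-- The binary Veblen function: `veblen 0 β = ω ^ β`, and for `α > 0`,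
`veblen α` enumerates the common fixed points of `veblen γ` for `γ < α`. -/
noncomputable def veblen : Ordinal → Ordinal → Ordinal :=
  WellFounded.fix Ordinal.lt_wf
    (fun α ih => if α = 0 then fun β => omega0 ^ β
      else derivBFamily α (fun ξ h => ih ξ h))

/-- The set of strongly critical ordinals. -/
def StronglyCritical (γ : Ordinal) : Prop := _root_.veblen γ 0 = γ

/-- `Gamma β` is the `β`-th strongly critical ordinal. -/
noncomputable def Gamma : Ordinal → Ordinal :=
  enumOrd {γ | StronglyCritical γ}

/-- The least uncountable cardinal (as an ordinal) greater than `θ`. -/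
noncomputable def OmegaB (θ : Ordinal) : Ordinal :=
  sInf {o | θ < o ∧ o.card.ord = o ∧ Cardinal.aleph0 < o.card}

/-- Closure of `{0, Ω} ∪ {Γ_β : β ≤ θ}` under `+`, `veblen` and the
given partial collapsing function `f` on arguments below `α`. -/
def closB (θ α : Ordinal) (f : ∀ ξ, ξ < α → Ordinal) : Set Ordinal :=
  ⋂₀ {S : Set Ordinal |
      0 ∈ S ∧ OmegaB θ ∈ S ∧ (∀ β ≤ θ, Gamma β ∈ S) ∧
      (∀ x ∈ S, ∀ y ∈ S, x + y ∈ S) ∧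
      (∀ x ∈ S, ∀ y ∈ S, _root_.veblen x y ∈ S) ∧
      (∀ ξ (h : ξ < α), ξ ∈ S → f ξ h ∈ S)}

/-- The relativised collapsing function `ψ_θ`. -/
noncomputable def psiB (θ : Ordinal) : Ordinal → Ordinal :=
  WellFounded.fix Ordinal.lt_wf
    (fun α ih => sInf {β | β ∉ closB θ α (fun ξ h => ih ξ h)})

/-- The relativised collapsing hierarchy `B_θ(α)`. -/
def BB (θ α : Ordinal) : Set Ordinal :=
  closB θ α (fun ξ _ => psiB θ ξ)

/-- The least strongly critical ordinal strictly above `δ`. -/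
noncomputable def gammaSucc (δ : Ordinal) : Ordinal :=
  sInf {γ | δ < γ ∧ StronglyCritical γ}

/-!
Write `α = φ γ δ` with `γ, δ < α`. Then `α` is a power of `ω`, hence additively principal; it is
not strongly critical (from `γ < α` one gets `φ γ α = α = φ γ δ`, so `δ = α`), so it is neither `Ω`
nor any `Γ_β`; and it is no value `ψ ξ`, because `ψ ξ` is the least ordinal outside `B(ξ)`, which
would then contain `γ, δ` and hence `φ γ δ`. Finally `φ x y = φ γ δ` forces `(x, y) = (γ, δ)`,
`y = α` or `δ = φ x y = α`. So if `γ ∉ B(η)` or `δ ∉ B(η)`, the set `B(η) \ {α}` is closed under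
every generating clause, and by minimality `α ∉ B(η)`.
-/

universe u

open Cardinal

theorem derivFamily_eq_of_range_eq {ι κ : Type*} [Small.{u} ι] [Small.{u} κ]
    {f : ι → Ordinal.{u} → Ordinal.{u}} {g : κ → Ordinal.{u} → Ordinal.{u}}
    (hf : ∀ i, Order.IsNormal (f i)) (hg : ∀ k, Order.IsNormal (g k))
    (h : Set.range f = Set.range g) : derivFamily f = derivFamily g := by
  rw [derivFamily_eq_enumOrd hf, derivFamily_eq_enumOrd hg,
    ← Set.biInter_range (g := Function.fixedPoints), ← Set.biInter_range (g := Function.fixedPoints), h]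

set_option linter.deprecated false in
theorem Ordinal.veblen_eq_derivBFamily {α : Ordinal} (hα : α ≠ 0) :
    Ordinal.veblen α = derivBFamily α fun ξ _ => Ordinal.veblen ξ := by
  rw [veblen_of_ne_zero hα, derivBFamily]
  refine derivFamily_eq_of_range_eq (fun _ => isNormal_veblen _) (fun _ => isNormal_veblen _) ?_
  ext f
  simp [range_familyOfBFamily, brange]

theorem veblen_eq_ordinal_veblen : _root_.veblen = Ordinal.veblen := by
  funext α
  induction α using WellFoundedLT.induction with
  | _ α ih =>
  rw [_root_.veblen, WellFounded.fix_eq]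
  rcases eq_or_ne α 0 with rfl | hα
  · simp
  · rw [if_neg hα, Ordinal.veblen_eq_derivBFamily hα]
    exact congrArg _ (funext₂ ih)

theorem stronglyCritical_iff {γ : Ordinal} : StronglyCritical γ ↔ Ordinal.veblen γ 0 = γ := by
  rw [StronglyCritical, veblen_eq_ordinal_veblen]

theorem exists_aleph0_lt_and_lt_ord (a : Ordinal.{u}) : ∃ κ : Cardinal.{u}, ℵ₀ < κ ∧ a < κ.ord :=
  ⟨Order.succ (max a.card ℵ₀), (le_max_right _ _).trans_lt (Order.lt_succ _),
    lt_ord.2 ((le_max_left _ _).trans_lt (Order.lt_succ _))⟩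

theorem omega0_opow_lt_ord {κ : Cardinal.{u}} (hκ : ℵ₀ < κ) {β : Ordinal} (hβ : β < κ.ord) :
    ω ^ β < κ.ord := by
  rw [lt_ord] at hβ ⊢
  refine (card_opow_le _ _).trans_lt (max_lt hκ (max_lt ?_ hβ))
  rwa [card_omega0]

theorem veblen_lt_ord_of_isRegular {κ : Cardinal.{0}} (hκ : κ.IsRegular) (hκ₀ : ℵ₀ < κ)
    {γ β : Ordinal} (hγ : γ < κ.ord) (hβ : β < κ.ord) : Ordinal.veblen γ β < κ.ord := by
  induction γ using WellFoundedLT.induction generalizing β with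
  | _ γ ih =>
  rcases eq_or_ne γ 0 with rfl | h0
  · rw [veblen_zero_apply]
    exact omega0_opow_lt_ord hκ₀ hβ
  · rw [Ordinal.veblen_eq_derivBFamily h0]
    exact derivFamily_lt_ord hκ (by rwa [mk_toType, ← lt_ord]) hκ₀.ne'
      (fun i b hb => ih _ (typein_lt_self i) ((typein_lt_self i).trans hγ) hb) hβ

theorem veblen_lt_ord {κ : Cardinal.{0}} (hκ : ℵ₀ < κ) {γ β : Ordinal} (hγ : γ < κ.ord)
    (hβ : β < κ.ord) : Ordinal.veblen γ β < κ.ord := by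
  -- `κ` need not be regular: use the regular cardinal `μ ≤ κ` just above `γ` and `β`.
  set μ := Order.succ (max (max γ.card β.card) ℵ₀)
  have hμ : ℵ₀ < μ := (le_max_right _ _).trans_lt (Order.lt_succ _)
  have hμκ : μ ≤ κ := Order.succ_le_of_lt (max_lt (max_lt (lt_ord.1 hγ) (lt_ord.1 hβ)) hκ)
  refine (veblen_lt_ord_of_isRegular (isRegular_succ (le_max_right _ _)) hμ ?_ ?_).trans_le
    (ord_le_ord.2 hμκ)
  · exact lt_ord.2 ((le_max_left _ _).trans (le_max_left _ _) |>.trans_lt (Order.lt_succ _))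
  · exact lt_ord.2 ((le_max_right _ _).trans (le_max_left _ _) |>.trans_lt (Order.lt_succ _))

theorem stronglyCritical_ord {κ : Cardinal.{0}} (hκ : ℵ₀ < κ) : StronglyCritical κ.ord := by
  have hlim : Order.IsSuccLimit κ.ord := isSuccLimit_ord hκ.le
  have hfix : ∀ γ < κ.ord, Ordinal.veblen γ κ.ord = κ.ord := fun γ hγ =>
    le_antisymm (((isNormal_veblen γ).le_iff_forall_le hlim).2 fun β hβ =>
      (veblen_lt_ord hκ hγ hβ).le) (right_le_veblen γ _)
  obtain ⟨β, hβ⟩ := (mem_range_veblen hlim.ne_bot).2 hfix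
  rw [stronglyCritical_iff]
  exact le_antisymm ((veblen_le_veblen_iff_right.2 zero_le).trans_eq hβ) (left_le_veblen _ _)

theorem not_bddAbove_stronglyCritical : ¬ BddAbove {γ | StronglyCritical γ} := by
  rw [not_bddAbove_iff]
  intro a
  obtain ⟨κ, hκ, ha⟩ := exists_aleph0_lt_and_lt_ord a
  exact ⟨κ.ord, stronglyCritical_ord hκ, ha⟩

theorem stronglyCritical_Gamma (β : Ordinal) : StronglyCritical (Gamma β) :=
  enumOrd_mem not_bddAbove_stronglyCritical β

theorem stronglyCritical_OmegaB (θ : Ordinal) : StronglyCritical (OmegaB θ) := by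
  obtain ⟨κ, hκ, hθ⟩ := exists_aleph0_lt_and_lt_ord θ
  have hmem : OmegaB θ ∈ {o | θ < o ∧ o.card.ord = o ∧ ℵ₀ < o.card} :=
    csInf_mem ⟨κ.ord, hθ, by rw [card_ord], by rwa [card_ord]⟩
  exact hmem.2.1 ▸ stronglyCritical_ord hmem.2.2

theorem StronglyCritical.ne_veblen {x γ δ : Ordinal} (hx : StronglyCritical x)
    (hγ : γ < Ordinal.veblen γ δ) (hδ : δ < Ordinal.veblen γ δ) : x ≠ Ordinal.veblen γ δ := by
  rintro rfl
  rw [stronglyCritical_iff] at hx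
  have hfix : Ordinal.veblen γ (Ordinal.veblen γ δ) = Ordinal.veblen γ δ := by
    rw [← hx, veblen_veblen_of_lt (hx.symm ▸ hγ)]
  exact hδ.ne (veblen_injective γ hfix).symm

theorem sInf_compl_ne_veblen {S : Set Ordinal} (hS : ∀ x ∈ S, ∀ y ∈ S, Ordinal.veblen x y ∈ S)
    {γ δ : Ordinal} (hγ : γ < Ordinal.veblen γ δ) (hδ : δ < Ordinal.veblen γ δ) :
    sInf Sᶜ ≠ Ordinal.veblen γ δ := by
  intro he
  rcases Sᶜ.eq_empty_or_nonempty with hempty | hne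
  · rw [hempty, Ordinal.sInf_empty] at he
    exact veblen_pos.ne he
  · have hbelow : ∀ x < Ordinal.veblen γ δ, x ∈ S := fun x hx =>
      not_not.1 (notMem_of_lt_csInf (he ▸ hx) (OrderBot.bddBelow _))
    exact he ▸ csInf_mem hne <| hS γ (hbelow γ hγ) δ (hbelow δ hδ)

theorem psiB_eq_sInf_compl (θ ξ : Ordinal) : psiB θ ξ = sInf (BB θ ξ)ᶜ := by
  rw [psiB, WellFounded.fix_eq]
  rfl

section BB

variable {θ η : Ordinal}

theorem veblen_mem_BB {x y : Ordinal} (hx : x ∈ BB θ η) (hy : y ∈ BB θ η) :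
    Ordinal.veblen x y ∈ BB θ η := fun S hS =>
  veblen_eq_ordinal_veblen ▸ hS.2.2.2.2.1 x (hx S hS) y (hy S hS)

theorem mem_BB_of_veblen_mem_BB {γ δ : Ordinal} (hγ : γ < Ordinal.veblen γ δ)
    (hδ : δ < Ordinal.veblen γ δ) (h : Ordinal.veblen γ δ ∈ BB θ η) :
    γ ∈ BB θ η ∧ δ ∈ BB θ η := by
  by_contra hnot
  set α := Ordinal.veblen γ δ
  have hprincipal : IsPrincipal (· + ·) α := by
    obtain ⟨b, hb⟩ := veblen_mem_range_opow γ δ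
    rw [show α = ω ^ b from hb.symm]
    exact isPrincipal_add_omega0_opow b
  suffices BB θ η ⊆ BB θ η \ {α} from (this h).2 rfl
  refine Set.sInter_subset_of_mem ⟨⟨fun S hS => hS.1, veblen_pos.ne⟩,
    ⟨fun S hS => hS.2.1, (stronglyCritical_OmegaB θ).ne_veblen hγ hδ⟩,
    fun β hβ => ⟨fun S hS => hS.2.2.1 β hβ, (stronglyCritical_Gamma β).ne_veblen hγ hδ⟩,
    ?_, ?_, ?_⟩
  · rintro x ⟨hx, hxα⟩ y ⟨hy, hyα⟩
    refine ⟨fun S hS => hS.2.2.2.1 x (hx S hS) y (hy S hS), fun he => ?_⟩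
    have hxlt : x < α := lt_of_le_of_ne (he ▸ le_self_add) hxα
    have hylt : y < α := lt_of_le_of_ne (he ▸ le_add_self) hyα
    exact (hprincipal hxlt hylt).ne he
  · rintro x ⟨hx, -⟩ y ⟨hy, hyα⟩
    rw [veblen_eq_ordinal_veblen]
    refine ⟨veblen_mem_BB hx hy, fun he => ?_⟩
    rcases veblen_eq_veblen_iff.1 he with ⟨rfl, rfl⟩ | ⟨-, rfl⟩ | ⟨-, rfl⟩
    · exact hnot ⟨hx, hy⟩
    · exact hyα rfl
    · exact hδ.ne he
  · rintro ξ hξ ⟨hξB, -⟩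
    refine ⟨fun S hS => hS.2.2.2.2.2 ξ hξ (hξB S hS), ?_⟩
    show psiB θ ξ ≠ α
    rw [psiB_eq_sInf_compl]
    exact sInf_compl_ne_veblen (fun x hx y hy => veblen_mem_BB hx hy) hγ hδ

end BB

theorem stmt17 (θ η α γ δ : Ordinal) (hγ : γ < _root_.veblen γ δ) (hδ : δ < _root_.veblen γ δ)
    (hα : α = _root_.veblen γ δ) :
    α ∈ BB θ η ↔ γ ∈ BB θ η ∧ δ ∈ BB θ η := by
  rw [veblen_eq_ordinal_veblen] at hγ hδ hα
  subst hα
  exact ⟨mem_BB_of_veblen_mem_BB hγ hδ, fun h => veblen_mem_BB h.1 h.2⟩
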